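/- Let F be a field, let L be the subspace lattice of F³, and suppose {g_1, g_2, g_3, g_4} generates L where each g_i is a point (1-dimensional subspace) or a line (2-dimensional subspace). Then each g_i is distinct from the bottom element 0 and the top element F³, and moreover the quadruple is in general position: the g_i form an antichain, no three of the points among them are collinear, and no three of the lines among them are concurrent. -/

import Mathlib

/-- A quadruple of points/lines (1- and 2-dimensional subspaces of `F³`) is in
general position: it is an antichain, no three points among its components are
collinear, and no three lines among its components are concurrent. -/
def GeneralPosition {F : Type*} [Field F]
    (g : Fin 4 → Submodule F (Fin 3 → F)) : Prop :=
  (∀ i j, i ≠ j → ¬ g i ≤ g j) ∧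
  (∀ i j k, i ≠ j → j ≠ k → i ≠ k →
    Module.finrank F (g i) = 1 → Module.finrank F (g j) = 1 →
    Module.finrank F (g k) = 1 → ¬ g i ≤ g j ⊔ g k) ∧
  (∀ i j k, i ≠ j → j ≠ k → i ≠ k →
    Module.finrank F (g i) = 2 → Module.finrank F (g j) = 2 →
    Module.finrank F (g k) = 2 → ¬ g i ⊓ g j ≤ g k)

/-!
For `q ≠ ⊥, ⊤` and `l ≠ ⊤`, the subspaces lying below `l` or above `q` form a sublattice of
`Sub(V)`, and it is proper because a vector space is not the union of the two proper subspaces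
`l` and `q`. Every way in which the quadruple can fail to be in general position produces such a
pair `(q, l)` with all four `g i` in that sublattice, contradicting generation. The pairs come
from the two incidence facts of the projective plane: two points span a proper subspace and two
lines meet. For instance, for three collinear points take `l` to be their line and `q` the fourth
element.
-/

open Set Module

section Lattice

variable {α : Type*} [Lattice α]

theorem isSublattice_Iic_union_Ici (a b : α) : IsSublattice (Iic a ∪ Ici b) where
  supClosed := by
    rintro x (hx | hx) y (hy | hy)
    exacts [Or.inl (sup_le hx hy), Or.inr (le_sup_of_le_right hy),
      Or.inr (le_sup_of_le_left hx), Or.inr (le_sup_of_le_left hx)]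
  infClosed := by
    rintro x (hx | hx) y (hy | hy)
    exacts [Or.inl (inf_le_of_left_le hx), Or.inl (inf_le_of_left_le hx),
      Or.inl (inf_le_of_right_le hy), Or.inr (le_inf hx hy)]

variable [BoundedOrder α]

def CoveredByIicUnionIci (s : Set α) : Prop :=
  ∃ q l : α, q ≠ ⊥ ∧ q ≠ ⊤ ∧ l ≠ ⊤ ∧ s ⊆ Iic l ∪ Ici q

theorem CoveredByIicUnionIci.mono {s t : Set α} (hts : t ⊆ s) (hs : CoveredByIicUnionIci s) :
    CoveredByIicUnionIci t :=
  let ⟨q, l, hq₀, hq, hl, hsub⟩ := hs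
  ⟨q, l, hq₀, hq, hl, hts.trans hsub⟩

theorem coveredByIicUnionIci_of_le_sup {a b c d : α} (hbc : b ⊔ c ≠ ⊤) (hd₀ : d ≠ ⊥)
    (hd : d ≠ ⊤) (ha : a ≤ b ⊔ c) : CoveredByIicUnionIci {a, b, c, d} :=
  ⟨d, b ⊔ c, hd₀, hd, hbc, by simp [insert_subset_iff, ha]⟩

theorem coveredByIicUnionIci_of_inf_le {a b c d : α} (hab : a ⊓ b ≠ ⊥) (ha : a ≠ ⊤)
    (hd : d ≠ ⊤) (hc : a ⊓ b ≤ c) : CoveredByIicUnionIci {a, b, c, d} :=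
  ⟨a ⊓ b, d, hab, ne_top_of_le_ne_top ha inf_le_left, hd, by simp [insert_subset_iff, hc]⟩

end Lattice

namespace Submodule

variable {R M : Type*} [Ring R] [AddCommGroup M] [Module R M]

theorem exists_notMem_and_notMem {p q : Submodule R M} (hp : p ≠ ⊤) (hq : q ≠ ⊤) :
    ∃ v, v ∉ p ∧ v ∉ q := by
  obtain ⟨a, ha⟩ : ∃ a, a ∉ p := by simpa [eq_top_iff'] using hp
  obtain ⟨b, hb⟩ : ∃ b, b ∉ q := by simpa [eq_top_iff'] using hq
  by_cases haq : a ∈ q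
  · by_cases hbp : b ∈ p
    · refine ⟨a + b, fun h => ha ?_, fun h => hb ?_⟩
      · simpa using p.sub_mem h hbp
      · simpa using q.sub_mem h haq
    · exact ⟨b, hbp, hb⟩
  · exact ⟨a, ha, haq⟩

variable {K V : Type*} [DivisionRing K] [AddCommGroup V] [Module K V]

theorem Iic_union_Ici_ne_univ {q l : Submodule K V} (hq₀ : q ≠ ⊥) (hq : q ≠ ⊤) (hl : l ≠ ⊤) :
    Iic l ∪ Ici q ≠ univ := by
  obtain ⟨v, hvl, hvq⟩ := exists_notMem_and_notMem hl hq
  have hv : v ≠ 0 := fun h => hvl (h ▸ l.zero_mem)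
  intro h
  rcases h.symm ▸ mem_univ (K ∙ v) with hle | hle
  · exact hvl ((span_singleton_le_iff_mem v l).1 hle)
  · have := ((nonzero_span_atom v hv).le_iff.1 hle).resolve_left hq₀
    exact hvq (this ▸ mem_span_singleton_self v)

theorem _root_.CoveredByIicUnionIci.latticeClosure_ne_univ {s : Set (Submodule K V)}
    (hs : CoveredByIicUnionIci s) : latticeClosure s ≠ univ := by
  obtain ⟨q, l, hq₀, hq, hl, hsub⟩ := hs
  intro h
  apply Iic_union_Ici_ne_univ hq₀ hq hl
  exact univ_subset_iff.1 (h ▸ latticeClosure_min hsub (isSublattice_Iic_union_Ici l q))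

theorem ne_bot_and_ne_top_of_finrank (hV : finrank K V = 3) {x : Submodule K V}
    (hx : finrank K x = 1 ∨ finrank K x = 2) : x ≠ ⊥ ∧ x ≠ ⊤ := by
  constructor <;> rintro rfl
  · simp at hx
  · rw [finrank_top, hV] at hx
    omega

variable [FiniteDimensional K V]

theorem sup_ne_top_of_finrank_eq_one (hV : finrank K V = 3) {x y : Submodule K V}
    (hx : finrank K x = 1) (hy : finrank K y = 1) : x ⊔ y ≠ ⊤ := by
  intro h
  have := finrank_add_le_finrank_add_finrank x y
  rw [h, finrank_top, hV, hx, hy] at this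
  omega

theorem inf_ne_bot_of_finrank_eq_two (hV : finrank K V = 3) {x y : Submodule K V}
    (hx : finrank K x = 2) (hy : finrank K y = 2) : x ⊓ y ≠ ⊥ := by
  intro h
  have := finrank_sup_add_finrank_inf_eq x y
  rw [h, finrank_bot, hx, hy] at this
  have := (x ⊔ y).finrank_le
  omega

theorem coveredByIicUnionIci_triple (hV : finrank K V = 3) {x y z : Submodule K V}
    (hx : finrank K x = 1 ∨ finrank K x = 2) (hy : finrank K y = 1 ∨ finrank K y = 2)
    (hz : finrank K z = 1 ∨ finrank K z = 2) : CoveredByIicUnionIci {x, y, z} := by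
  obtain ⟨hx₀, hx'⟩ := ne_bot_and_ne_top_of_finrank hV hx
  obtain ⟨hy₀, hy'⟩ := ne_bot_and_ne_top_of_finrank hV hy
  obtain ⟨hz₀, hz'⟩ := ne_bot_and_ne_top_of_finrank hV hz
  rcases hx with hx | hx <;> rcases hy with hy | hy
  · exact ⟨z, x ⊔ y, hz₀, hz', sup_ne_top_of_finrank_eq_one hV hx hy, by simp [insert_subset_iff]⟩
  · rcases hz with hz | hz
    · exact ⟨y, x ⊔ z, hy₀, hy', sup_ne_top_of_finrank_eq_one hV hx hz,
        by simp [insert_subset_iff]⟩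
    · exact ⟨y ⊓ z, x, inf_ne_bot_of_finrank_eq_two hV hy hz,
        ne_top_of_le_ne_top hy' inf_le_left, hx', by simp [insert_subset_iff]⟩
  · rcases hz with hz | hz
    · exact ⟨x, y ⊔ z, hx₀, hx', sup_ne_top_of_finrank_eq_one hV hy hz,
        by simp [insert_subset_iff]⟩
    · exact ⟨x ⊓ z, y, inf_ne_bot_of_finrank_eq_two hV hx hz,
        ne_top_of_le_ne_top hx' inf_le_left, hy', by simp [insert_subset_iff]⟩
  · exact ⟨x ⊓ y, z, inf_ne_bot_of_finrank_eq_two hV hx hy,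
      ne_top_of_le_ne_top hx' inf_le_left, hz', by simp [insert_subset_iff]⟩

theorem coveredByIicUnionIci_of_le (hV : finrank K V = 3) {a b c d : Submodule K V}
    (ha : finrank K a = 1 ∨ finrank K a = 2) (hb : finrank K b = 1 ∨ finrank K b = 2)
    (hc : finrank K c = 1 ∨ finrank K c = 2) (hd : finrank K d = 1 ∨ finrank K d = 2)
    (hab : a ≤ b) : CoveredByIicUnionIci {a, b, c, d} := by
  obtain rfl | ⟨ha, hb⟩ : a = b ∨ finrank K a = 1 ∧ finrank K b = 2 := by
    have := finrank_mono hab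
    rcases ha with ha | ha <;> rcases hb with hb | hb
    · exact Or.inl (eq_of_le_of_finrank_eq hab (by omega))
    · exact Or.inr ⟨ha, hb⟩
    · omega
    · exact Or.inl (eq_of_le_of_finrank_eq hab (by omega))
  · simpa using coveredByIicUnionIci_triple hV ha hc hd
  obtain ⟨ha₀, ha'⟩ := ne_bot_and_ne_top_of_finrank hV (.inl ha)
  have hb' := (ne_bot_and_ne_top_of_finrank hV (.inr hb)).2
  rcases hc with hc | hc <;> rcases hd with hd | hd
  · exact ⟨a, c ⊔ d, ha₀, ha', sup_ne_top_of_finrank_eq_one hV hc hd,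
      by simp [insert_subset_iff, hab]⟩
  · exact ⟨b ⊓ d, a ⊔ c, inf_ne_bot_of_finrank_eq_two hV hb hd,
      ne_top_of_le_ne_top hb' inf_le_left, sup_ne_top_of_finrank_eq_one hV ha hc,
      by simp [insert_subset_iff]⟩
  · exact ⟨b ⊓ c, a ⊔ d, inf_ne_bot_of_finrank_eq_two hV hb hc,
      ne_top_of_le_ne_top hb' inf_le_left, sup_ne_top_of_finrank_eq_one hV ha hd,
      by simp [insert_subset_iff]⟩
  · exact ⟨c ⊓ d, b, inf_ne_bot_of_finrank_eq_two hV hc hd,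
      ne_top_of_le_ne_top (ne_bot_and_ne_top_of_finrank hV (.inr hc)).2 inf_le_left, hb',
      by simp [insert_subset_iff, hab]⟩

end Submodule

theorem range_fin_four_subset_of_ne {β : Type*} (g : Fin 4 → β) {i j : Fin 4} (hij : i ≠ j) :
    ∃ k m, range g ⊆ {g i, g j, g k, g m} := by
  obtain ⟨k, m, h⟩ : ∃ k m : Fin 4, ∀ n, n = i ∨ n = j ∨ n = k ∨ n = m := by
    revert i j; decide
  refine ⟨k, m, ?_⟩
  rintro _ ⟨n, rfl⟩
  rcases h n with rfl | rfl | rfl | rfl <;> simp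

theorem range_fin_four_subset_of_ne_of_ne_of_ne {β : Type*} (g : Fin 4 → β) {i j k : Fin 4}
    (hij : i ≠ j) (hjk : j ≠ k) (hik : i ≠ k) : ∃ m, range g ⊆ {g i, g j, g k, g m} := by
  obtain ⟨m, h⟩ : ∃ m : Fin 4, ∀ n, n = i ∨ n = j ∨ n = k ∨ n = m := by
    revert i j k; decide
  refine ⟨m, ?_⟩
  rintro _ ⟨n, rfl⟩
  rcases h n with rfl | rfl | rfl | rfl <;> simp

/-- A generating quadruple of the subspace lattice of `F³` whose
members are points or lines avoids `⊥` and `⊤` and is in general position. -/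
theorem stmt_19 (F : Type*) [Field F] (g : Fin 4 → Submodule F (Fin 3 → F))
    (hpl : ∀ i, Module.finrank F (g i) = 1 ∨ Module.finrank F (g i) = 2)
    (hgen : latticeClosure (Set.range g) = Set.univ) :
    (∀ i, g i ≠ ⊥ ∧ g i ≠ ⊤) ∧ GeneralPosition g := by
  have hV : finrank F (Fin 3 → F) = 3 := finrank_fin_fun F
  have hne : ∀ i, g i ≠ ⊥ ∧ g i ≠ ⊤ := fun i =>
    Submodule.ne_bot_and_ne_top_of_finrank hV (hpl i)
  have hgen' {s : Set (Submodule F (Fin 3 → F))} (hs : range g ⊆ s) :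
      ¬ CoveredByIicUnionIci s := fun hcov => (hcov.mono hs).latticeClosure_ne_univ hgen
  refine ⟨hne, fun i j hij hle => ?_, fun i j k hij hjk hik _ hj hk hle => ?_,
    fun i j k hij hjk hik hi hj _ hle => ?_⟩
  · obtain ⟨k, m, hs⟩ := range_fin_four_subset_of_ne g hij
    exact hgen' hs
      (Submodule.coveredByIicUnionIci_of_le hV (hpl i) (hpl j) (hpl k) (hpl m) hle)
  · obtain ⟨m, hs⟩ := range_fin_four_subset_of_ne_of_ne_of_ne g hij hjk hik
    exact hgen' hs (coveredByIicUnionIci_of_le_sup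
      (Submodule.sup_ne_top_of_finrank_eq_one hV hj hk) (hne m).1 (hne m).2 hle)
  · obtain ⟨m, hs⟩ := range_fin_four_subset_of_ne_of_ne_of_ne g hij hjk hik
    exact hgen' hs (coveredByIicUnionIci_of_inf_le
      (Submodule.inf_ne_bot_of_finrank_eq_two hV hi hj) (hne i).2 (hne m).2 hle)
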